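/- arXiv:2105.05406 — 5 statements merged into one kernel-verified Lean document; each statement's English description precedes it below -/
import Mathlib

section
/- Let d ≥ 2 and let A and B be k×k matrices with entries in {0,1} such that B is irreducible and A > B (i.e., A_{i,j} ≥ B_{i,j} for all i,j and A_{i',j'} > B_{i',j'} for at least one pair (i',j')). Then there exists N ≥ 1 such that p_{A;i}(N) > p_{B;i}(N) for every 1 ≤ i ≤ k. -/
open Filter Real

/-- `treeP d M n i` = number of `n`-blocks of the hom Markov tree-shift `T_M`
on the `d`-tree whose root label is `i`. -/
def treeP (d : ℕ) {ι : Type} [Fintype ι] (M : Matrix ι ι ℕ) : ℕ → ι → ℕ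
  | 0, _ => 1
  | n + 1, i => (∑ j, M i j * treeP d M n j) ^ d

/-- `|Δ_n| = 1 + d + ⋯ + d^n`. -/
def deltaCard (d n : ℕ) : ℕ := ∑ i ∈ Finset.range (n + 1), d ^ i

/-- Topological entropy of the hom Markov tree-shift `T_M` on the `d`-tree. -/
noncomputable def treeEntropy (d : ℕ) {ι : Type} [Fintype ι] (M : Matrix ι ι ℕ) : ℝ :=
  Filter.limsup (fun n => Real.log (∑ i, treeP d M n i) / (deltaCard d n : ℝ)) Filter.atTop

/-- `M` has entries in `{0,1}`. -/
def IsBinary {ι : Type} [Fintype ι] (M : Matrix ι ι ℕ) : Prop := ∀ i j, M i j ≤ 1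

/-- `M` is irreducible. -/
def MatIrreducible {ι : Type} [Fintype ι] [DecidableEq ι] (M : Matrix ι ι ℕ) : Prop :=
  ∀ i j, ∃ n, 1 ≤ n ∧ 0 < (M ^ n) i j

/-- `M` is the block matrix `[[E_a, R],[O, E_b]]` with `R` binary of constant row sum `l`. -/
def IsMabl (a b l : ℕ) (M : Matrix (Fin (a + b)) (Fin (a + b)) ℕ) : Prop :=
  (∀ i j, M i j ≤ 1) ∧
  (∀ i j : Fin (a + b), (i : ℕ) < a → (j : ℕ) < a → M i j = 1) ∧
  (∀ i j : Fin (a + b), a ≤ (i : ℕ) → a ≤ (j : ℕ) → M i j = 1) ∧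
  (∀ i j : Fin (a + b), a ≤ (i : ℕ) → (j : ℕ) < a → M i j = 0) ∧
  (∀ i : Fin (a + b), (i : ℕ) < a → (∑ j : Fin (a + b), if a ≤ (j : ℕ) then M i j else 0) = l)

/-
Enlarging the transition matrix can only increase block counts, and the count at the root
symbol `i` strictly increases at level `n + 1` as soon as, for some `j`, the contribution of
`j` to `p(n + 1, i)` does. At a position `(i₀, j₀)` with `B i₀ j₀ < A i₀ j₀` this happens at
every level, because irreducibility makes all counts of `T_B` positive. A strict increase at `j`
then moves to every `i` with `0 < B i j` one level up, so by irreducibility it reaches every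
root symbol; the lengths of the connecting paths are bounded, which gives a common level `N`.
-/

open Finset

section PowApplyPos

variable {ι : Type*} [Fintype ι] [DecidableEq ι]

theorem Matrix.pow_succ_apply_pos_iff {B : Matrix ι ι ℕ} {m : ℕ} {i j : ι} :
    0 < (B ^ (m + 1)) i j ↔ ∃ l, 0 < B i l ∧ 0 < (B ^ m) l j := by
  simp [pow_succ', Matrix.mul_apply, Finset.sum_pos_iff]

theorem Matrix.pow_apply_pos_induction {B : Matrix ι ι ℕ} {P : ℕ → ι → Prop}
    (step : ∀ n i j, 0 < B i j → P n j → P (n + 1) i) {m : ℕ} {i j : ι}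
    (hm : 0 < (B ^ m) i j) {n : ℕ} (hn : P n j) : P (n + m) i := by
  induction m generalizing i with
  | zero =>
    obtain rfl : i = j := by by_contra h; simp [h] at hm
    exact hn
  | succ m ih =>
    obtain ⟨l, hil, hlj⟩ := Matrix.pow_succ_apply_pos_iff.mp hm
    exact step _ i l hil (ih hlj)

end PowApplyPos

theorem MatIrreducible.exists_pos {ι : Type} [Fintype ι] [DecidableEq ι] {B : Matrix ι ι ℕ}
    (hB : MatIrreducible B) (i : ι) : ∃ j, 0 < B i j := by
  obtain ⟨m, hm, hpos⟩ := hB i i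
  obtain ⟨m, rfl⟩ := Nat.exists_eq_add_of_le' hm
  obtain ⟨j, hij, -⟩ := Matrix.pow_succ_apply_pos_iff.mp hpos
  exact ⟨j, hij⟩

section TreeP

variable {d : ℕ} {ι : Type} [Fintype ι] {A B : Matrix ι ι ℕ}

theorem treeP_mono (hle : ∀ i j, B i j ≤ A i j) (n : ℕ) (i : ι) :
    treeP d B n i ≤ treeP d A n i := by
  induction n generalizing i with
  | zero => simp [treeP]
  | succ n ih =>
    exact Nat.pow_le_pow_left (sum_le_sum fun j _ => Nat.mul_le_mul (hle i j) (ih j)) d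

theorem treeP_pos (hrow : ∀ i, ∃ j, 0 < B i j) (n : ℕ) (i : ι) : 0 < treeP d B n i := by
  induction n generalizing i with
  | zero => simp [treeP]
  | succ n ih =>
    obtain ⟨j, hij⟩ := hrow i
    exact Nat.pow_pos (sum_pos' (fun _ _ => Nat.zero_le _) ⟨j, mem_univ j, Nat.mul_pos hij (ih j)⟩)

theorem treeP_succ_lt (hd : d ≠ 0) (hle : ∀ i j, B i j ≤ A i j) {n : ℕ} {i : ι} (j : ι)
    (hj : B i j * treeP d B n j < A i j * treeP d A n j) :
    treeP d B (n + 1) i < treeP d A (n + 1) i :=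
  Nat.pow_lt_pow_left
    (sum_lt_sum (fun l _ => Nat.mul_le_mul (hle i l) (treeP_mono hle n l)) ⟨j, mem_univ j, hj⟩)
    hd

theorem treeP_succ_lt_of_lt (hd : d ≠ 0) (hle : ∀ i j, B i j ≤ A i j)
    (hrow : ∀ i, ∃ j, 0 < B i j) {i j : ι} (hij : B i j < A i j) (n : ℕ) :
    treeP d B (n + 1) i < treeP d A (n + 1) i :=
  treeP_succ_lt hd hle j <| Nat.mul_lt_mul_of_lt_of_le hij (treeP_mono hle n j)
    ((treeP_pos hrow n j).trans_le (treeP_mono hle n j))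

theorem treeP_succ_lt_of_pos (hd : d ≠ 0) (hle : ∀ i j, B i j ≤ A i j) {n : ℕ} {i j : ι}
    (hij : 0 < B i j) (hn : treeP d B n j < treeP d A n j) :
    treeP d B (n + 1) i < treeP d A (n + 1) i :=
  treeP_succ_lt hd hle j <| Nat.mul_lt_mul_of_le_of_lt (hle i j) hn (hij.trans_le (hle i j))

end TreeP

theorem exists_block_count_lt_general {d k : ℕ} (hd : 2 ≤ d)
    (A B : Matrix (Fin k) (Fin k) ℕ)
    (hirr : MatIrreducible B)
    (hle : ∀ i j, B i j ≤ A i j) (hlt : ∃ i j, B i j < A i j) :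
    ∃ N, 1 ≤ N ∧ ∀ i : Fin k, treeP d B N i < treeP d A N i := by
  have hd₀ : d ≠ 0 := by omega
  obtain ⟨i₀, j₀, hlt⟩ := hlt
  have hroot (n : ℕ) : treeP d B (n + 1) i₀ < treeP d A (n + 1) i₀ :=
    treeP_succ_lt_of_lt hd₀ hle (MatIrreducible.exists_pos hirr) hlt n
  choose m _ hm using fun i => hirr i i₀
  let S := univ.sup m
  refine ⟨S + 1, by omega, fun i => ?_⟩
  have hmS : m i ≤ S := le_sup (mem_univ i)
  have key := Matrix.pow_apply_pos_induction (P := fun n l => treeP d B n l < treeP d A n l)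
    (fun _ _ _ => treeP_succ_lt_of_pos hd₀ hle) (hm i) (hroot (S - m i))
  rwa [show S - m i + 1 + m i = S + 1 by omega] at key

/-- **Lemma 2.1.** If `B` is binary irreducible and `A > B` entrywise (both binary), then
there is `N ≥ 1` with `p_{A;i}(N) > p_{B;i}(N)` for every root label `i`. -/
theorem exists_block_count_lt {d k : ℕ} (hd : 2 ≤ d)
    (A B : Matrix (Fin k) (Fin k) ℕ) (hA : IsBinary A) (hB : IsBinary B)
    (hirr : MatIrreducible B)
    (hle : ∀ i j, B i j ≤ A i j) (hlt : ∃ i j, B i j < A i j) :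
    ∃ N, 1 ≤ N ∧ ∀ i : Fin k, treeP d B N i < treeP d A N i :=
  exists_block_count_lt_general hd A B hirr hle hlt
end

section
/- Let d ≥ 2, b > a ≥ 1, 0 < l ≤ b, and suppose a + l ≤ b. Then h(T_{M(a,b;l)}) = log b (for any choice of the block R with row sums l). -/
open Filter Real

/-!
The lower block `E_b` is a closed class all of whose rows sum to `b`, so for a root label in it
there are exactly `b ^ (|Δ_n| - 1)` `n`-blocks; and since `a + l ≤ b`, every row of `M` sums to
at most `b`, so no root label admits more. Hence `p_M(n)` lies between `b ^ (|Δ_n| - 1)` and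
`(a + b) b ^ (|Δ_n| - 1)`, and `log p_M(n) / |Δ_n| → log b`.
-/

open Topology

theorem deltaCard_succ (d n : ℕ) : deltaCard d (n + 1) = d * deltaCard d n + 1 := by
  rw [deltaCard, Finset.sum_range_succ', deltaCard, Finset.mul_sum]
  simp [pow_succ, mul_comm]

theorem one_le_deltaCard (d n : ℕ) : 1 ≤ deltaCard d n := by
  rw [deltaCard, Finset.sum_range_succ']
  simp

theorem tendsto_deltaCard_atTop {d : ℕ} (hd : 0 < d) : Tendsto (deltaCard d) atTop atTop := by
  refine tendsto_atTop_mono (fun n => ?_) tendsto_id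
  calc n ≤ ∑ _i ∈ Finset.range (n + 1), 1 := by simp
    _ ≤ deltaCard d n := Finset.sum_le_sum fun i _ => Nat.one_le_pow _ _ hd

theorem pow_deltaCard_succ_sub_one (c d n : ℕ) :
    c ^ (deltaCard d (n + 1) - 1) = (c * c ^ (deltaCard d n - 1)) ^ d := by
  rw [deltaCard_succ, Nat.add_sub_cancel, ← pow_succ', Nat.sub_add_cancel (one_le_deltaCard d n),
    ← pow_mul, mul_comm]

section TreeBlocks

variable {ι : Type} [Fintype ι] {d c : ℕ} {M : Matrix ι ι ℕ}

theorem treeP_le_pow_of_rowSum_le (hM : ∀ i, ∑ j, M i j ≤ c) (n : ℕ) (i : ι) :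
    treeP d M n i ≤ c ^ (deltaCard d n - 1) := by
  induction n generalizing i with
  | zero => simp [treeP, deltaCard]
  | succ n ih =>
    rw [treeP, pow_deltaCard_succ_sub_one]
    gcongr
    calc ∑ j, M i j * treeP d M n j ≤ ∑ j, M i j * c ^ (deltaCard d n - 1) := by
          gcongr with j; exact ih j
      _ = (∑ j, M i j) * c ^ (deltaCard d n - 1) := (Finset.sum_mul ..).symm
      _ ≤ c * c ^ (deltaCard d n - 1) := by gcongr; exact hM i

theorem pow_le_treeP_of_le_rowSum {S : Finset ι} (hS : ∀ i ∈ S, c ≤ ∑ j ∈ S, M i j) (n : ℕ)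
    {i : ι} (hi : i ∈ S) : c ^ (deltaCard d n - 1) ≤ treeP d M n i := by
  induction n generalizing i with
  | zero => simp [treeP, deltaCard]
  | succ n ih =>
    rw [treeP, pow_deltaCard_succ_sub_one]
    gcongr
    calc c * c ^ (deltaCard d n - 1) ≤ (∑ j ∈ S, M i j) * c ^ (deltaCard d n - 1) := by
          gcongr; exact hS i hi
      _ = ∑ j ∈ S, M i j * c ^ (deltaCard d n - 1) := Finset.sum_mul ..
      _ ≤ ∑ j ∈ S, M i j * treeP d M n j := Finset.sum_le_sum fun j hj => by gcongr; exact ih hj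
      _ ≤ ∑ j, M i j * treeP d M n j := Finset.sum_le_sum_of_subset (Finset.subset_univ S)

end TreeBlocks

theorem tendsto_log_div_of_pow_le_mul_of_le_mul_pow {u : ℕ → ℝ} {D : ℕ → ℕ} {c A B : ℝ}
    (hD : Tendsto D atTop atTop) (hc : 0 < c) (hA : 0 < A)
    (hlow : ∀ n, c ^ D n ≤ A * u n) (hup : ∀ n, u n ≤ B * c ^ D n) :
    Tendsto (fun n => Real.log (u n) / D n) atTop (𝓝 (Real.log c)) := by
  have hu : ∀ n, 0 < u n := fun n =>
    pos_of_mul_pos_right ((pow_pos hc _).trans_le (hlow n)) hA.le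
  have hB : 0 < B := pos_of_mul_pos_left ((hu 0).trans_le (hup 0)) (pow_pos hc _).le
  have hD' : Tendsto (fun n => (D n : ℝ)) atTop atTop := tendsto_natCast_atTop_atTop.comp hD
  have hlim : ∀ C : ℝ, Tendsto (fun n => C / D n + Real.log c) atTop (𝓝 (Real.log c)) := fun C => by
    simpa using (tendsto_const_nhds.div_atTop hD').add_const (Real.log c)
  refine tendsto_of_tendsto_of_tendsto_of_le_of_le' (hlim (-Real.log A)) (hlim (Real.log B))
    ?_ ?_ <;> filter_upwards [hD'.eventually_gt_atTop 0] with n hn <;>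
    rw [div_add' _ _ _ hn.ne', div_le_div_iff_of_pos_right hn]
  · have := Real.log_le_log (pow_pos hc _) (hlow n)
    rw [Real.log_pow, Real.log_mul hA.ne' (hu n).ne'] at this
    linarith
  · have := Real.log_le_log (hu n) (hup n)
    rw [Real.log_mul hB.ne' (pow_pos hc _).ne', Real.log_pow] at this
    linarith

theorem treeEntropy_eq_log_of_pow_le_of_le_mul_pow {ι : Type} [Fintype ι] {d c K : ℕ}
    {M : Matrix ι ι ℕ} (hd : 0 < d) (hc : 0 < c)
    (hlow : ∀ n, c ^ (deltaCard d n - 1) ≤ ∑ i, treeP d M n i)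
    (hup : ∀ n, ∑ i, treeP d M n i ≤ K * c ^ (deltaCard d n - 1)) :
    treeEntropy d M = Real.log c := by
  refine (tendsto_log_div_of_pow_le_mul_of_le_mul_pow (tendsto_deltaCard_atTop hd)
    (by exact_mod_cast hc) (A := c) (B := K) (by exact_mod_cast hc) (fun n => ?_) (fun n => ?_)
    ).limsup_eq
  · have h : c ^ deltaCard d n ≤ c * ∑ i, treeP d M n i := by
      rw [← Nat.sub_add_cancel (one_le_deltaCard d n), pow_succ']
      exact Nat.mul_le_mul_left c (hlow n)
    exact_mod_cast h
  · have h : ∑ i, treeP d M n i ≤ K * c ^ deltaCard d n :=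
      (hup n).trans (Nat.mul_le_mul_left K (Nat.pow_le_pow_right hc (Nat.sub_le _ _)))
    exact_mod_cast h

section Mabl

variable {a b l : ℕ} {M : Matrix (Fin (a + b)) (Fin (a + b)) ℕ}

theorem IsMabl.sum_row_natAdd (hM : IsMabl a b l M) {i : Fin (a + b)} (hi : a ≤ (i : ℕ)) :
    ∑ j : Fin b, M i (Fin.natAdd a j) = b := by
  calc ∑ j : Fin b, M i (Fin.natAdd a j) = ∑ _j : Fin b, 1 :=
        Finset.sum_congr rfl fun j _ => hM.2.2.1 i _ hi (by simp)
    _ = b := by simp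

theorem IsMabl.sum_row_le (hM : IsMabl a b l M) (hsum : a + l ≤ b) (i : Fin (a + b)) :
    ∑ j, M i j ≤ b := by
  rw [Fin.sum_univ_add]
  obtain hi | hi := lt_or_ge (i : ℕ) a
  · have hleft : ∑ j : Fin a, M i (Fin.castAdd b j) = a := by
      calc ∑ j : Fin a, M i (Fin.castAdd b j) = ∑ _j : Fin a, 1 :=
            Finset.sum_congr rfl fun j _ => hM.2.1 i _ hi (by simp)
        _ = a := by simp
    have hright : ∑ j : Fin b, M i (Fin.natAdd a j) = l := by
      have h := hM.2.2.2.2 i hi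
      rwa [Fin.sum_univ_add, Finset.sum_eq_zero fun j _ => if_neg (by simp), zero_add,
        Finset.sum_congr rfl fun j _ => if_pos (by simp)] at h
    omega
  · have hleft : ∑ j : Fin a, M i (Fin.castAdd b j) = 0 :=
      Finset.sum_eq_zero fun j _ => hM.2.2.2.1 i _ hi (by simp)
    rw [hleft, hM.sum_row_natAdd hi, zero_add]

end Mabl

theorem treeEntropy_Mabl_of_add_le_general {d a b l : ℕ} (hd : 2 ≤ d)
    (hab : a < b) (hsum : a + l ≤ b)
    (M : Matrix (Fin (a + b)) (Fin (a + b)) ℕ) (hM : IsMabl a b l M) :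
    treeEntropy d M = Real.log b := by
  set S := Finset.univ.map (Fin.natAddEmb a (m := b))
  have hS : ∀ i ∈ S, b ≤ ∑ j ∈ S, M i j := by
    simp only [S, Finset.mem_map, Finset.sum_map, Fin.natAddEmb_apply]
    rintro _ ⟨i, -, rfl⟩
    exact (hM.sum_row_natAdd (by simp)).ge
  have hroot : Fin.natAdd a ⟨0, by omega⟩ ∈ S := Finset.mem_map_of_mem _ (Finset.mem_univ _)
  refine treeEntropy_eq_log_of_pow_le_of_le_mul_pow (K := a + b) (by omega) (by omega)
    (fun n => ?_) (fun n => ?_)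
  · exact (pow_le_treeP_of_le_rowSum hS n hroot).trans
      (Finset.single_le_sum (fun _ _ => Nat.zero_le _) (Finset.mem_univ _))
  · calc ∑ i, treeP d M n i ≤ ∑ _i : Fin (a + b), b ^ (deltaCard d n - 1) :=
          Finset.sum_le_sum fun i _ => treeP_le_pow_of_rowSum_le (hM.sum_row_le hsum) n i
      _ = (a + b) * b ^ (deltaCard d n - 1) := by simp

/-- **Theorem 3.2 (a).** If `b > a ≥ 1`, `0 < l ≤ b` and `a + l ≤ b`,
then `h(T_{M(a,b;l)}) = log b`. -/
theorem treeEntropy_Mabl_of_add_le {d a b l : ℕ} (hd : 2 ≤ d)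
    (ha : 1 ≤ a) (hab : a < b) (hl : 0 < l) (hlb : l ≤ b) (hsum : a + l ≤ b)
    (M : Matrix (Fin (a + b)) (Fin (a + b)) ℕ) (hM : IsMabl a b l M) :
    treeEntropy d M = Real.log b :=
  treeEntropy_Mabl_of_add_le_general hd hab hsum M hM
end

section
/- Let d ≥ 2 and let M be an essential k×k matrix with entries in {0,1} (every row and every column of M contains at least one 1). Then the sequence a_n := (d−1)·log(max_{1≤i≤k} p_{M;i}(n))/d^{n+1} is nondecreasing in n and converges to h(T_M); moreover there exists a sequence of real numbers (γ_i)_{i≥0} with 1 ≤ γ_i ≤ k^d for all i such that a_n = Σ_{i=0}^{n} ((d−1)/d^{i+1})·log γ_i for every n ≥ 0. -/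
open Filter Real

/-!
Write `Q n = maxᵢ p_{M;i}(n)`. A column of `M` containing a `1` gives `Q n ^ d ≤ Q (n + 1)`, and
binarity gives `Q (n + 1) ≤ (k * Q n) ^ d`. Hence `γ₀ = 1`, `γₙ₊₁ = Q (n + 1) / Q n ^ d` lie in
`[1, k ^ d]`, and telescoping `log Q (n + 1) = log γₙ₊₁ + d * log Q n` gives the series for `aₙ`.
Its terms are nonnegative and dominated by a geometric series, so `aₙ` increases to a finite
limit. Finally `p_M(n)` lies between `Q n` and `k * Q n`, and `(d - 1) * |Δₙ| = d ^ (n + 1) - 1`,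
so `log p_M(n) / |Δₙ|` has the same limit.
-/

open Finset

/-- `scaledLog d Q n` is `aₙ` when `Q n = maxᵢ p_{M;i}(n)`, and `powRatio d Q i` is then `γᵢ`. -/
noncomputable def scaledLog (d : ℕ) (Q : ℕ → ℝ) (n : ℕ) : ℝ :=
  ((d : ℝ) - 1) * Real.log (Q n) / (d : ℝ) ^ (n + 1)

noncomputable def powRatio (d : ℕ) (Q : ℕ → ℝ) : ℕ → ℝ
  | 0 => Q 0
  | n + 1 => Q (n + 1) / Q n ^ d

lemma sum_range_sub_one_div_pow {x : ℝ} (hx : x ≠ 0) (m : ℕ) :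
    ∑ i ∈ range m, (x - 1) / x ^ (i + 1) = 1 - 1 / x ^ m := by
  induction m with
  | zero => simp
  | succ m ih =>
    rw [sum_range_succ, ih]
    field_simp
    ring

section PowRatio

variable {d : ℕ} {Q : ℕ → ℝ}

lemma one_le_of_pow_le_succ (hQ0 : Q 0 = 1) (hlow : ∀ n, Q n ^ d ≤ Q (n + 1)) (n : ℕ) :
    1 ≤ Q n := by
  induction n with
  | zero => exact hQ0.ge
  | succ n ih => exact (one_le_pow₀ ih).trans (hlow n)

lemma log_div_pow_eq_sum_log_powRatio (hd : d ≠ 0) (hQ : ∀ n, 0 < Q n) (n : ℕ) :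
    Real.log (Q n) / (d : ℝ) ^ (n + 1)
      = ∑ i ∈ range (n + 1), Real.log (powRatio d Q i) / (d : ℝ) ^ (i + 1) := by
  induction n with
  | zero => simp [powRatio]
  | succ n ih =>
    have hlog : Real.log (Q (n + 1)) = Real.log (powRatio d Q (n + 1)) + d * Real.log (Q n) := by
      rw [powRatio, Real.log_div (hQ _).ne' (pow_pos (hQ n) d).ne', Real.log_pow]
      ring
    rw [sum_range_succ, ← ih, hlog]
    field_simp
    ring

lemma scaledLog_eq_sum (hd : d ≠ 0) (hQ : ∀ n, 0 < Q n) (n : ℕ) :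
    scaledLog d Q n
      = ∑ i ∈ range (n + 1), ((d : ℝ) - 1) / (d : ℝ) ^ (i + 1) * Real.log (powRatio d Q i) := by
  rw [scaledLog, mul_div_assoc, log_div_pow_eq_sum_log_powRatio hd hQ, mul_sum]
  exact sum_congr rfl fun i _ => by ring

lemma one_le_powRatio (hQ0 : Q 0 = 1) (hQ : ∀ n, 0 < Q n) (hlow : ∀ n, Q n ^ d ≤ Q (n + 1)) :
    ∀ i, 1 ≤ powRatio d Q i
  | 0 => hQ0.ge
  | n + 1 => by rw [powRatio, one_le_div (pow_pos (hQ n) d)]; exact hlow n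

lemma powRatio_le {c : ℝ} (hc : 1 ≤ c) (hQ0 : Q 0 = 1) (hQ : ∀ n, 0 < Q n)
    (hup : ∀ n, Q (n + 1) ≤ (c * Q n) ^ d) : ∀ i, powRatio d Q i ≤ c ^ d
  | 0 => by rw [powRatio, hQ0]; exact one_le_pow₀ hc
  | n + 1 => by rw [powRatio, div_le_iff₀ (pow_pos (hQ n) d), ← mul_pow]; exact hup n

lemma powRatio_pos (hQ : ∀ n, 0 < Q n) : ∀ i, 0 < powRatio d Q i
  | 0 => hQ 0
  | n + 1 => div_pos (hQ _) (pow_pos (hQ n) d)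

lemma monotone_scaledLog (hd : 1 ≤ d) (hQ0 : Q 0 = 1) (hQ : ∀ n, 0 < Q n)
    (hlow : ∀ n, Q n ^ d ≤ Q (n + 1)) : Monotone (scaledLog d Q) := by
  have hd' : d ≠ 0 := by omega
  refine monotone_nat_of_le_succ fun n => ?_
  rw [scaledLog_eq_sum hd' hQ, scaledLog_eq_sum hd' hQ, sum_range_succ _ (n + 1)]
  have hweight : 0 ≤ ((d : ℝ) - 1) / (d : ℝ) ^ (n + 1 + 1) :=
    div_nonneg (sub_nonneg.2 (by exact_mod_cast hd)) (by positivity)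
  exact le_add_of_nonneg_right
    (mul_nonneg hweight (Real.log_nonneg (one_le_powRatio hQ0 hQ hlow _)))

lemma scaledLog_le {c : ℝ} (hd : 1 ≤ d) (hc : 1 ≤ c) (hQ0 : Q 0 = 1) (hQ : ∀ n, 0 < Q n)
    (hup : ∀ n, Q (n + 1) ≤ (c * Q n) ^ d) (n : ℕ) : scaledLog d Q n ≤ d * Real.log c := by
  have hd' : (d : ℝ) ≠ 0 := by exact_mod_cast (show d ≠ 0 by omega)
  have hweight : ∀ i : ℕ, 0 ≤ ((d : ℝ) - 1) / (d : ℝ) ^ (i + 1) := fun i =>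
    div_nonneg (sub_nonneg.2 (by exact_mod_cast hd)) (by positivity)
  calc scaledLog d Q n
      = ∑ i ∈ range (n + 1), ((d : ℝ) - 1) / (d : ℝ) ^ (i + 1) * Real.log (powRatio d Q i) :=
        scaledLog_eq_sum (by omega) hQ n
    _ ≤ ∑ i ∈ range (n + 1), ((d : ℝ) - 1) / (d : ℝ) ^ (i + 1) * (d * Real.log c) := by
        gcongr with i
        · exact hweight i
        · rw [← Real.log_pow]
          exact Real.log_le_log (powRatio_pos hQ i) (powRatio_le hc hQ0 hQ hup i)
    _ = (1 - 1 / (d : ℝ) ^ (n + 1)) * (d * Real.log c) := by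
        rw [← sum_mul, sum_range_sub_one_div_pow hd']
    _ ≤ d * Real.log c := by
        have : 0 ≤ (d : ℝ) * Real.log c := mul_nonneg d.cast_nonneg (Real.log_nonneg hc)
        have : 0 ≤ 1 / (d : ℝ) ^ (n + 1) := by positivity
        nlinarith

lemma tendsto_scaledLog_iSup {c : ℝ} (hd : 1 ≤ d) (hc : 1 ≤ c) (hQ0 : Q 0 = 1)
    (hlow : ∀ n, Q n ^ d ≤ Q (n + 1)) (hup : ∀ n, Q (n + 1) ≤ (c * Q n) ^ d) :
    Tendsto (scaledLog d Q) atTop (nhds (⨆ n, scaledLog d Q n)) := by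
  have hQ n : 0 < Q n := zero_lt_one.trans_le (one_le_of_pow_le_succ hQ0 hlow n)
  exact tendsto_atTop_ciSup (monotone_scaledLog hd hQ0 hQ hlow)
    ⟨d * Real.log c, Set.forall_mem_range.2 (scaledLog_le hd hc hQ0 hQ hup)⟩

end PowRatio

lemma sub_one_mul_deltaCard (d n : ℕ) :
    ((d : ℝ) - 1) * deltaCard d n = (d : ℝ) ^ (n + 1) - 1 := by
  rw [deltaCard, Nat.cast_sum, mul_comm]
  push_cast
  exact geom_sum_mul _ _

lemma log_div_deltaCard_eq {d : ℕ} (hd : 2 ≤ d) (S : ℕ → ℝ) (n : ℕ) :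
    Real.log (S n) / deltaCard d n = scaledLog d S n / (1 - 1 / (d : ℝ) ^ (n + 1)) := by
  have hd1 : (1 : ℝ) < d := by exact_mod_cast hd
  have hpow : (d : ℝ) ^ (n + 1) ≠ 0 := by positivity
  rw [scaledLog, one_sub_div hpow, div_div_div_cancel_right₀ hpow, ← sub_one_mul_deltaCard,
    mul_div_mul_left _ _ (sub_ne_zero.2 hd1.ne')]

lemma tendsto_log_div_deltaCard {d : ℕ} (hd : 2 ≤ d) {P S : ℕ → ℝ} {C L : ℝ}
    (hP : ∀ n, 0 < P n) (hPS : ∀ n, P n ≤ S n) (hSP : ∀ n, S n ≤ C * P n)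
    (hlim : Tendsto (scaledLog d P) atTop (nhds L)) :
    Tendsto (fun n => Real.log (S n) / deltaCard d n) atTop (nhds L) := by
  have hd1 : (0 : ℝ) ≤ d - 1 := sub_nonneg.2 (by exact_mod_cast (show 1 ≤ d by omega))
  have hpow : Tendsto (fun n : ℕ => (d : ℝ) ^ (n + 1)) atTop atTop :=
    (tendsto_pow_atTop_atTop_of_one_lt (by exact_mod_cast hd)).comp (tendsto_add_atTop_nat 1)
  have hS n : 0 < S n := (hP n).trans_le (hPS n)
  have hC : 0 < C := pos_of_mul_pos_left ((hS 0).trans_le (hSP 0)) (hP 0).le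
  have hlower n : scaledLog d P n ≤ scaledLog d S n := by
    unfold scaledLog
    gcongr
    · exact hP n
    · exact hPS n
  have hupper n :
      scaledLog d S n ≤ scaledLog d P n + ((d : ℝ) - 1) * Real.log C / (d : ℝ) ^ (n + 1) := by
    rw [scaledLog, scaledLog, ← add_div, ← mul_add, ← Real.log_mul (hP n).ne' hC.ne']
    gcongr
    · exact hS n
    · rw [mul_comm]; exact hSP n
  have hscaled : Tendsto (scaledLog d S) atTop (nhds L) :=
    tendsto_of_tendsto_of_tendsto_of_le_of_le hlim
      (by simpa using hlim.add (tendsto_const_nhds.div_atTop hpow)) hlower hupper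
  have hcorr : Tendsto (fun n : ℕ => 1 - 1 / (d : ℝ) ^ (n + 1)) atTop (nhds 1) := by
    simpa using (tendsto_const_nhds (x := (1 : ℝ))).sub
      ((tendsto_const_nhds (x := (1 : ℝ))).div_atTop hpow)
  have hquot := hscaled.div hcorr one_ne_zero
  rw [div_one] at hquot
  exact hquot.congr fun n => (log_div_deltaCard_eq hd S n).symm

section TreeShift

variable {ι : Type} [Fintype ι] {d : ℕ} {M : Matrix ι ι ℕ}

lemma natCast_sup_le_sum (f : ι → ℕ) : ((univ.sup f : ℕ) : ℝ) ≤ ∑ i, (f i : ℝ) := by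
  exact_mod_cast Finset.sup_le fun i hi => single_le_sum (fun _ _ => Nat.zero_le _) hi

lemma sum_natCast_le_card_mul_sup (f : ι → ℕ) :
    ∑ i, (f i : ℝ) ≤ Fintype.card ι * ((univ.sup f : ℕ) : ℝ) := by
  exact_mod_cast sum_le_card_nsmul univ f _ fun i hi => le_sup hi

lemma sup_treeP_zero [Nonempty ι] : univ.sup (treeP d M 0) = 1 :=
  sup_const univ_nonempty 1

lemma sup_treeP_pow_le_sup_treeP_succ [Nonempty ι] (hcol : ∀ j, ∃ i, M i j = 1) (n : ℕ) :
    univ.sup (treeP d M n) ^ d ≤ univ.sup (treeP d M (n + 1)) := by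
  obtain ⟨j, -, hj⟩ := exists_mem_eq_sup univ univ_nonempty (treeP d M n)
  obtain ⟨i, hi⟩ := hcol j
  calc univ.sup (treeP d M n) ^ d = (M i j * treeP d M n j) ^ d := by rw [hi, one_mul, hj]
    _ ≤ treeP d M (n + 1) i := Nat.pow_le_pow_left
        (single_le_sum (f := fun j => M i j * treeP d M n j) (fun _ _ => Nat.zero_le _)
          (mem_univ j)) d
    _ ≤ univ.sup (treeP d M (n + 1)) := le_sup (mem_univ i)

lemma sup_treeP_succ_le (hbin : IsBinary M) (n : ℕ) :
    univ.sup (treeP d M (n + 1)) ≤ (Fintype.card ι * univ.sup (treeP d M n)) ^ d := by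
  refine Finset.sup_le fun i _ => Nat.pow_le_pow_left ?_ d
  calc ∑ j, M i j * treeP d M n j ≤ ∑ _j : ι, univ.sup (treeP d M n) :=
        sum_le_sum fun j _ => (Nat.mul_le_mul (hbin i j) (le_sup (mem_univ j))).trans_eq
          (one_mul _)
    _ = Fintype.card ι * univ.sup (treeP d M n) := by simp

end TreeShift

theorem entropy_series_representation_general {d k : ℕ} (hd : 2 ≤ d) (hk : 1 ≤ k)
    (M : Matrix (Fin k) (Fin k) ℕ) (hbin : IsBinary M)
    (hcol : ∀ j, ∃ i, M i j = 1) :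
    Monotone (fun n =>
      ((d : ℝ) - 1) * Real.log ((Finset.univ.sup (treeP d M n) : ℕ) : ℝ) / (d : ℝ) ^ (n + 1)) ∧
    Filter.Tendsto (fun n =>
        ((d : ℝ) - 1) * Real.log ((Finset.univ.sup (treeP d M n) : ℕ) : ℝ) / (d : ℝ) ^ (n + 1))
      Filter.atTop (nhds (treeEntropy d M)) ∧
    ∃ γ : ℕ → ℝ, (∀ i, 1 ≤ γ i ∧ γ i ≤ (k : ℝ) ^ d) ∧
      ∀ n, ((d : ℝ) - 1) * Real.log ((Finset.univ.sup (treeP d M n) : ℕ) : ℝ) / (d : ℝ) ^ (n + 1)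
        = ∑ i ∈ Finset.range (n + 1), (((d : ℝ) - 1) / (d : ℝ) ^ (i + 1)) * Real.log (γ i) := by
  have : Nonempty (Fin k) := ⟨⟨0, hk⟩⟩
  let Q : ℕ → ℝ := fun n => (univ.sup (treeP d M n) : ℕ)
  have hQ0 : Q 0 = 1 := by simp [Q, sup_treeP_zero]
  have hlow n : Q n ^ d ≤ Q (n + 1) := by
    simp only [Q]
    exact_mod_cast sup_treeP_pow_le_sup_treeP_succ hcol n
  have hup n : Q (n + 1) ≤ (k * Q n) ^ d := by
    simpa [Q] using (Nat.cast_le (α := ℝ)).2 (sup_treeP_succ_le hbin n)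
  have hQ n : 0 < Q n := zero_lt_one.trans_le (one_le_of_pow_le_succ hQ0 hlow n)
  have hk' : (1 : ℝ) ≤ k := by exact_mod_cast hk
  have hlim := tendsto_scaledLog_iSup (by omega) hk' hQ0 hlow hup
  have hentropy : treeEntropy d M = ⨆ n, scaledLog d Q n :=
    (tendsto_log_div_deltaCard hd hQ (fun n => natCast_sup_le_sum (treeP d M n))
      (by simpa using fun n => sum_natCast_le_card_mul_sup (treeP d M n)) hlim).limsup_eq
  refine ⟨monotone_scaledLog (by omega) hQ0 hQ hlow, hentropy ▸ hlim, powRatio d Q,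
    fun i => ⟨one_le_powRatio hQ0 hQ hlow i, powRatio_le hk' hQ0 hQ hup i⟩,
    scaledLog_eq_sum (by omega) hQ⟩

/-- **Proposition 4.2.** For an essential binary matrix `M`, the sequence
`aₙ = (d−1)·log(maxᵢ p_{M;i}(n))/d^{n+1}` is nondecreasing, converges to `h(T_M)`,
and equals the partial sums `Σ_{i=0}^n ((d−1)/d^{i+1})·log γᵢ` for some
`1 ≤ γᵢ ≤ k^d`. -/
theorem entropy_series_representation {d k : ℕ} (hd : 2 ≤ d) (hk : 1 ≤ k)
    (M : Matrix (Fin k) (Fin k) ℕ) (hbin : IsBinary M)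
    (hrow : ∀ i, ∃ j, M i j = 1) (hcol : ∀ j, ∃ i, M i j = 1) :
    Monotone (fun n =>
      ((d : ℝ) - 1) * Real.log ((Finset.univ.sup (treeP d M n) : ℕ) : ℝ) / (d : ℝ) ^ (n + 1)) ∧
    Filter.Tendsto (fun n =>
        ((d : ℝ) - 1) * Real.log ((Finset.univ.sup (treeP d M n) : ℕ) : ℝ) / (d : ℝ) ^ (n + 1))
      Filter.atTop (nhds (treeEntropy d M)) ∧
    ∃ γ : ℕ → ℝ, (∀ i, 1 ≤ γ i ∧ γ i ≤ (k : ℝ) ^ d) ∧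
      ∀ n, ((d : ℝ) - 1) * Real.log ((Finset.univ.sup (treeP d M n) : ℕ) : ℝ) / (d : ℝ) ^ (n + 1)
        = ∑ i ∈ Finset.range (n + 1), (((d : ℝ) - 1) / (d : ℝ) ^ (i + 1)) * Real.log (γ i) :=
  entropy_series_representation_general hd hk M hbin hcol
end

section
/- Fix d ≥ 2 and let y_1, …, y_l (l ≥ 1) be positive integers. Define μ^{(d)}_y = (d−1)·max over all cyclic shifts (w_1,…,w_l) of (y_1,…,y_l) of the quantity Σ_{i=1}^{l} (log w_i)/d^i. Then μ^{(d)}_y lies in the closure of H^{(d)}_irr = {h(T_M) : M binary irreducible}; more precisely, there exists a sequence (M_N)_{N≥1} of irreducible {0,1}-matrices with lim_{N→∞} h(T_{M_N}) = μ^{(d)}_y. -/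
/-!
Take a cyclic shift `w` of `y` attaining the maximum, pad it with `N` ones to a word `c` of
length `L = l + N`, and blow up the directed `L`-cycle by replacing its `t`-th vertex with `c t`
vertices. Blocks are then counted layer by layer: the number of `n`-blocks rooted in a layer is
a product `∏ᵢ c_{t-i} ^ (d ^ i)`, so `log p(n) / d ^ (n + 1)` is governed by the weighted sums
`∑_{j<n} d^{-(j+1)} log c_{s+j}` of the periodic word. These are at least the weighted sum of `w`
(reading from its start), and at most that value divided by `1 - d ^ (-L)`, because the padding
only delays the letters of `y`. Hence the entropies lie in `[μ, μ / (1 - d ^ (-L))]`, and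
`N → ∞` squeezes them to `μ`.
-/

open Filter Real

/-- Entropies of hom Markov tree-shifts with irreducible binary matrices. -/
def HsetIrr (d : ℕ) : Set ℝ :=
  {x | ∃ k, 1 ≤ k ∧ ∃ M : Matrix (Fin k) (Fin k) ℕ,
    IsBinary M ∧ MatIrreducible M ∧ x = treeEntropy d M}

open Topology

section TreeEntropy

lemma deltaCard_eq (d n : ℕ) : ((d : ℝ) - 1) * deltaCard d n + 1 = (d : ℝ) ^ (n + 1) := by
  rw [deltaCard, Nat.cast_sum, mul_comm]
  push_cast
  rw [geom_sum_mul]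
  ring

lemma succ_le_deltaCard {d : ℕ} (hd : 1 ≤ d) (n : ℕ) : n + 1 ≤ deltaCard d n :=
  calc n + 1 = ∑ _i ∈ Finset.range (n + 1), 1 := by simp
    _ ≤ deltaCard d n := Finset.sum_le_sum fun i _ => Nat.one_le_pow i d hd

lemma limsup_div_deltaCard_mem_Icc {d : ℕ} (hd : 1 ≤ d) {u : ℕ → ℝ} {a b C : ℝ} (ha : 0 ≤ a)
    (hlow : ∀ᶠ n in atTop, (d : ℝ) ^ (n + 1) * a ≤ u n)
    (hup : ∀ n, u n ≤ C + (d : ℝ) ^ (n + 1) * b) :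
    limsup (fun n => u n / deltaCard d n) atTop ∈
      Set.Icc (((d : ℝ) - 1) * a) (((d : ℝ) - 1) * b) := by
  have hD : ∀ n, (0 : ℝ) < deltaCard d n := fun n => by
    exact_mod_cast (Nat.succ_pos n).trans_le (succ_le_deltaCard hd n)
  have hDT : Tendsto (fun n => (deltaCard d n : ℝ)) atTop atTop :=
    tendsto_natCast_atTop_atTop.comp <| tendsto_atTop_mono (succ_le_deltaCard hd)
      (tendsto_add_atTop_nat 1)
  have hB : ∀ n, u n / deltaCard d n ≤ ((d : ℝ) - 1) * b + (C + b) / deltaCard d n := fun n => by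
    rw [div_le_iff₀ (hD n), add_mul, div_mul_cancel₀ _ (hD n).ne']
    have h := hup n
    rw [← deltaCard_eq] at h
    linarith
  have hBT : Tendsto (fun n => ((d : ℝ) - 1) * b + (C + b) / deltaCard d n) atTop
      (𝓝 (((d : ℝ) - 1) * b)) := by
    simpa using tendsto_const_nhds.add (tendsto_const_nhds.div_atTop hDT)
  have hA : ∀ᶠ n in atTop, ((d : ℝ) - 1) * a ≤ u n / deltaCard d n := hlow.mono fun n hn => by
    rw [le_div_iff₀ (hD n)]
    nlinarith [deltaCard_eq d n]
  refine ⟨le_limsup_of_frequently_le hA.frequently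
    (hBT.isBoundedUnder_le.mono_le (Eventually.of_forall hB)), ?_⟩
  calc limsup (fun n => u n / deltaCard d n) atTop
      ≤ limsup (fun n => ((d : ℝ) - 1) * b + (C + b) / deltaCard d n) atTop :=
        limsup_le_limsup (Eventually.of_forall hB) (isCoboundedUnder_le_of_eventually_le _ hA)
          hBT.isBoundedUnder_le
    _ = ((d : ℝ) - 1) * b := hBT.limsup_eq

lemma treeEntropy_mem_Icc {d : ℕ} (hd : 1 ≤ d) {ι : Type} [Fintype ι] [Nonempty ι]
    (M : Matrix ι ι ℕ) {a b : ℝ} (ha : 0 ≤ a) (hpos : ∀ n i, 0 < treeP d M n i)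
    (hup : ∀ n i, Real.log (treeP d M n i) ≤ (d : ℝ) ^ (n + 1) * b)
    (hlow : ∀ᶠ n in atTop, ∃ i, (d : ℝ) ^ (n + 1) * a ≤ Real.log (treeP d M n i)) :
    treeEntropy d M ∈ Set.Icc (((d : ℝ) - 1) * a) (((d : ℝ) - 1) * b) := by
  have hsum : ∀ n, (0 : ℝ) < ∑ i, (treeP d M n i : ℝ) := fun n =>
    Finset.sum_pos (fun i _ => by exact_mod_cast hpos n i) Finset.univ_nonempty
  refine limsup_div_deltaCard_mem_Icc hd ha (C := Real.log (Fintype.card ι))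
    (hlow.mono fun n ⟨i, hi⟩ => hi.trans <| Real.log_le_log (by exact_mod_cast hpos n i) <|
      Finset.single_le_sum (fun j _ => Nat.cast_nonneg _) (Finset.mem_univ i)) fun n => ?_
  have hle : ∑ i, (treeP d M n i : ℝ) ≤ Fintype.card ι * Real.exp ((d : ℝ) ^ (n + 1) * b) := by
    rw [← nsmul_eq_mul]
    exact Finset.sum_le_card_nsmul _ _ _ fun i _ =>
      (Real.log_le_iff_le_exp (by exact_mod_cast hpos n i)).1 (hup n i)
  calc Real.log (∑ i, (treeP d M n i : ℝ))
      ≤ Real.log (Fintype.card ι * Real.exp ((d : ℝ) ^ (n + 1) * b)) :=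
        Real.log_le_log (hsum n) hle
    _ = Real.log (Fintype.card ι) + (d : ℝ) ^ (n + 1) * b := by
        rw [Real.log_mul (by positivity) (Real.exp_pos _).ne', Real.log_exp]

end TreeEntropy

section Reindex

variable {ι κ : Type} [Fintype ι] [Fintype κ] (d : ℕ) (M : Matrix ι ι ℕ) (e : κ ≃ ι)

lemma treeP_submatrix (n : ℕ) (i : κ) :
    treeP d (M.submatrix e e) n i = treeP d M n (e i) := by
  induction n generalizing i with
  | zero => rfl
  | succ n ih =>
    show (∑ j, M (e i) (e j) * treeP d (M.submatrix e e) n j) ^ d =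
      (∑ j, M (e i) j * treeP d M n j) ^ d
    simp only [ih]
    rw [Equiv.sum_comp e fun j => M (e i) j * treeP d M n j]

lemma treeEntropy_submatrix : treeEntropy d (M.submatrix e e) = treeEntropy d M := by
  simp only [treeEntropy, treeP_submatrix]
  congr! 4 with n
  exact Equiv.sum_comp e fun i => (treeP d M n i : ℝ)

lemma MatIrreducible.submatrix [DecidableEq ι] [DecidableEq κ] {M : Matrix ι ι ℕ}
    (hM : MatIrreducible M) : MatIrreducible (M.submatrix e e) := fun i j => by
  obtain ⟨n, hn, hpos⟩ := hM (e i) (e j)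
  have hreindex : ∀ A : Matrix ι ι ℕ, A.submatrix e e = Matrix.reindexRingEquiv ℕ e.symm A :=
    fun A => by rw [Matrix.coe_reindexRingEquiv, Matrix.reindex_apply, Equiv.symm_symm]
  refine ⟨n, hn, ?_⟩
  rwa [hreindex, ← map_pow, ← hreindex]

lemma treeEntropy_mem_HsetIrr [DecidableEq ι] [Nonempty ι] {M : Matrix ι ι ℕ} (hb : IsBinary M)
    (hM : MatIrreducible M) : treeEntropy d M ∈ HsetIrr d :=
  let e := (Fintype.equivFin ι).symm
  ⟨Fintype.card ι, Fintype.card_pos, M.submatrix e e, fun _ _ => hb _ _, hM.submatrix e,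
    (treeEntropy_submatrix d M e).symm⟩

end Reindex

section CyclicSum

open Fin.CommRing

variable {L : ℕ} [NeZero L]

def cyclicSum (q : ℝ) (w : Fin L → ℝ) (n : ℕ) (s : Fin L) : ℝ :=
  ∑ j ∈ Finset.range n, q ^ (j + 1) * w (s + j)

variable {q : ℝ} {w : Fin L → ℝ}

lemma cyclicSum_succ (n : ℕ) (s : Fin L) :
    cyclicSum q w (n + 1) s = cyclicSum q w n s + q ^ (n + 1) * w (s + n) :=
  Finset.sum_range_succ _ _

lemma cyclicSum_comp_add (m s : Fin L) (n : ℕ) :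
    cyclicSum q (fun i => w (m + i)) n s = cyclicSum q w n (m + s) := by
  simp only [cyclicSum, add_assoc]

lemma cyclicSum_eq_sum_fin (s : Fin L) :
    cyclicSum q w L s = ∑ i : Fin L, q ^ ((i : ℕ) + 1) * w (s + i) := by
  rw [cyclicSum, ← Fin.sum_univ_eq_sum_range (fun j => q ^ (j + 1) * w (s + j))]
  simp only [Fin.cast_val_eq_self]

lemma cyclicSum_eq_sum_sub (s : Fin L) :
    cyclicSum q w L s = ∑ v : Fin L, q ^ (((v - s : Fin L) : ℕ) + 1) * w v := by
  rw [cyclicSum_eq_sum_fin,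
    ← Equiv.sum_comp (Equiv.addLeft s) fun v => q ^ (((v - s : Fin L) : ℕ) + 1) * w v]
  simp only [Equiv.coe_addLeft, add_sub_cancel_left]

lemma cyclicSum_nonneg (hq : 0 ≤ q) (hw : 0 ≤ w) (n : ℕ) (s : Fin L) : 0 ≤ cyclicSum q w n s :=
  Finset.sum_nonneg fun _ _ => mul_nonneg (pow_nonneg hq _) (hw _)

lemma cyclicSum_mono (hq : 0 ≤ q) (hw : 0 ≤ w) (s : Fin L) :
    Monotone fun n => cyclicSum q w n s := fun _ _ h =>
  Finset.sum_le_sum_of_subset_of_nonneg (Finset.range_subset_range.2 h)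
    fun _ _ _ => mul_nonneg (pow_nonneg hq _) (hw _)

lemma cyclicSum_period_add (n : ℕ) (s : Fin L) :
    cyclicSum q w (L + n) s = cyclicSum q w L s + q ^ L * cyclicSum q w n s := by
  rw [cyclicSum, Finset.sum_range_add, cyclicSum, cyclicSum, Finset.mul_sum]
  congr 1
  refine Finset.sum_congr rfl fun _ _ => ?_
  rw [Nat.cast_add, Fin.natCast_self, zero_add, ← mul_assoc, ← pow_add, add_assoc]

/-- After one period the sum starts over, damped by `q ^ L`. -/
lemma cyclicSum_le_div (hq0 : 0 ≤ q) (hq1 : q < 1) (hw : 0 ≤ w) {V : ℝ}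
    (hV : ∀ s, cyclicSum q w L s ≤ V) (n : ℕ) (s : Fin L) :
    cyclicSum q w n s ≤ V / (1 - q ^ L) := by
  have hqL : q ^ L < 1 := pow_lt_one₀ hq0 hq1 (NeZero.ne L)
  have hV0 : 0 ≤ V := (cyclicSum_nonneg hq0 hw L s).trans (hV s)
  have hVK : V ≤ V / (1 - q ^ L) := by
    rw [le_div_iff₀ (by linarith)]
    nlinarith [pow_nonneg hq0 L]
  induction n using Nat.strong_induction_on generalizing s with
  | _ n ih =>
    rcases le_or_gt n L with hn | hn
    · exact (cyclicSum_mono hq0 hw s hn).trans ((hV s).trans hVK)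
    · obtain ⟨b, rfl⟩ := Nat.exists_eq_add_of_lt hn
      have hb := ih (b + 1) (by have := NeZero.pos L; omega) s
      rw [add_assoc, cyclicSum_period_add]
      calc cyclicSum q w L s + q ^ L * cyclicSum q w (b + 1) s
          ≤ V + q ^ L * (V / (1 - q ^ L)) :=
            add_le_add (hV s) (mul_le_mul_of_nonneg_left hb (pow_nonneg hq0 L))
        _ = V / (1 - q ^ L) := by field_simp [(by linarith : (1 : ℝ) - q ^ L ≠ 0)]; ring

end CyclicSum

section Padding

open Fin.CommRing

variable {l N : ℕ} {q : ℝ} {u : Fin l → ℝ}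

lemma append_zero_nonneg (hu : 0 ≤ u) : 0 ≤ (Fin.append u 0 : Fin (l + N) → ℝ) := by
  intro v
  induction v using Fin.addCases with
  | left i => simpa using hu i
  | right j => simp

variable [NeZero l]

/-- The padding only delays letters: from `s`, every `u i` is met no earlier than when reading
`u` cyclically from a suitable `s'`. -/
lemma cyclicSum_append_zero_le (hq0 : 0 ≤ q) (hq1 : q ≤ 1) (hu : 0 ≤ u) (s : Fin (l + N)) :
    ∃ s' : Fin l, cyclicSum q (Fin.append u 0) (l + N) s ≤ cyclicSum q u l s' := by
  obtain ⟨s', hs'⟩ : ∃ s' : Fin l, ∀ i : Fin l,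
      ((i - s' : Fin l) : ℕ) ≤ ((Fin.castAdd N i - s : Fin (l + N)) : ℕ) := by
    induction s using Fin.addCases with
    | left s₀ =>
      refine ⟨s₀, fun i => ?_⟩
      rcases le_or_gt s₀ i with h | h
      · rw [Fin.sub_val_of_le h, Fin.sub_val_of_le (by exact h)]
        simp
      · rw [Fin.coe_sub_iff_lt.2 h, Fin.coe_sub_iff_lt.2 (by exact h)]
        simp only [Fin.val_castAdd]
        omega
    | right j =>
      refine ⟨0, fun i => ?_⟩
      have h : Fin.castAdd N i < Fin.natAdd l j := by simp [Fin.lt_def]; omega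
      rw [sub_zero, Fin.coe_sub_iff_lt.2 h]
      simp only [Fin.val_castAdd, Fin.val_natAdd]
      omega
  refine ⟨s', ?_⟩
  rw [cyclicSum_eq_sum_sub, cyclicSum_eq_sum_sub, Fin.sum_univ_add]
  simp only [Fin.append_left, Fin.append_right, Pi.zero_apply, mul_zero,
    Finset.sum_const_zero, add_zero]
  exact Finset.sum_le_sum fun i _ =>
    mul_le_mul_of_nonneg_right (pow_le_pow_of_le_one hq0 hq1 (by have := hs' i; omega)) (hu i)

lemma cyclicSum_le_cyclicSum_append_zero (hq0 : 0 ≤ q) (hu : 0 ≤ u) {n : ℕ} (hn : l ≤ n) :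
    cyclicSum q u l 0 ≤ cyclicSum q (Fin.append u 0 : Fin (l + N) → ℝ) n 0 := by
  have hl : cyclicSum q (Fin.append u 0 : Fin (l + N) → ℝ) l 0 = cyclicSum q u l 0 := by
    refine Finset.sum_congr rfl fun j hj => ?_
    have hj : j < l := Finset.mem_range.1 hj
    have hcast : ((j : Fin (l + N))) = Fin.castAdd N (j : Fin l) := by
      ext
      simp [Fin.val_cast_of_lt hj, Fin.val_cast_of_lt (lt_of_lt_of_le hj (Nat.le_add_right l N))]
    rw [zero_add, zero_add, hcast, Fin.append_left]
  exact hl ▸ cyclicSum_mono hq0 (append_zero_nonneg hu) 0 hn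

/-- `μ_y / (d - 1)` in the paper's notation, for `q = 1/d` and `u = log ∘ y`. -/
noncomputable def maxCyclicSum (q : ℝ) (u : Fin l → ℝ) : ℝ :=
  Finset.univ.sup' Finset.univ_nonempty (cyclicSum q u l)

lemma cyclicSum_rotate_append_zero_le (hq0 : 0 ≤ q) (hq1 : q < 1) (hu : 0 ≤ u) (m : Fin l)
    (n : ℕ) (s : Fin (l + N)) :
    cyclicSum q (Fin.append (fun i => u (m + i)) 0) n s ≤ maxCyclicSum q u / (1 - q ^ (l + N)) :=
  cyclicSum_le_div hq0 hq1 (append_zero_nonneg (u := fun i => u (m + i)) fun i => hu (m + i))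
    (fun s => by
      obtain ⟨s', hs'⟩ := cyclicSum_append_zero_le hq0 hq1.le (fun i => hu (m + i)) s
      rw [cyclicSum_comp_add] at hs'
      exact hs'.trans (Finset.le_sup' _ (Finset.mem_univ _))) n s

lemma maxCyclicSum_le_cyclicSum_rotate_append_zero (hq0 : 0 ≤ q) (hu : 0 ≤ u)
    {m : Fin l} (hm : cyclicSum q u l m = maxCyclicSum q u) {n : ℕ} (hn : l ≤ n) :
    maxCyclicSum q u ≤ cyclicSum q (Fin.append (fun i => u (m + i)) 0 : Fin (l + N) → ℝ) n 0 := by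
  have h := cyclicSum_le_cyclicSum_append_zero (N := N) hq0 (fun i => hu (m + i)) hn
  rwa [cyclicSum_comp_add, add_zero, hm] at h

end Padding

section CyclicBlowup

open Fin.CommRing

variable {L : ℕ} [NeZero L] (d : ℕ) (c : Fin L → ℕ)

/-- Edges run from every vertex of layer `t` to every vertex of layer `t - 1`, so that blocks
read `c` forwards (`log_layerCount`). -/
def cyclicBlowup : Matrix (Σ t : Fin L, Fin (c t)) (Σ t : Fin L, Fin (c t)) ℕ :=
  fun p q => if q.1 + 1 = p.1 then 1 else 0

def layerCount : ℕ → Fin L → ℕ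
  | 0, _ => 1
  | n + 1, t => (c (t - 1) * layerCount n (t - 1)) ^ d

lemma treeP_cyclicBlowup (n : ℕ) (p : Σ t : Fin L, Fin (c t)) :
    treeP d (cyclicBlowup c) n p = layerCount d c n p.1 := by
  induction n generalizing p with
  | zero => rfl
  | succ n ih =>
    show (∑ q, cyclicBlowup c p q * treeP d (cyclicBlowup c) n q) ^ d = _
    simp [cyclicBlowup, ih, ← Finset.univ_sigma_univ, Finset.sum_sigma, ← eq_sub_iff_add_eq,
      layerCount]

variable {c}

lemma one_le_layerCount (hc : ∀ t, 1 ≤ c t) (n : ℕ) (t : Fin L) : 1 ≤ layerCount d c n t := by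
  induction n generalizing t with
  | zero => exact le_rfl
  | succ n ih => exact Nat.one_le_pow _ _ (Nat.mul_pos (hc _) (ih _))

lemma log_layerCount (hd : d ≠ 0) (hc : ∀ t, 1 ≤ c t) (n : ℕ) (t : Fin L) :
    Real.log (layerCount d c n t) =
      (d : ℝ) ^ (n + 1) * cyclicSum (d : ℝ)⁻¹ (fun t => Real.log (c t)) n (t - n) := by
  induction n generalizing t with
  | zero => simp [layerCount, cyclicSum]
  | succ n ih =>
    have hd0 : (d : ℝ) ≠ 0 := by exact_mod_cast hd
    have hc0 : (c (t - 1) : ℝ) ≠ 0 := by exact_mod_cast Nat.one_le_iff_ne_zero.1 (hc _)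
    have hA0 : (layerCount d c n (t - 1) : ℝ) ≠ 0 := by
      exact_mod_cast Nat.one_le_iff_ne_zero.1 (one_le_layerCount d hc n _)
    have hshift : t - 1 - n = t - (n + 1 : ℕ) := by push_cast; ring
    have hlast : t - (n + 1 : ℕ) + n = t - 1 := by push_cast; ring
    rw [layerCount, Nat.cast_pow, Nat.cast_mul, Real.log_pow, Real.log_mul hc0 hA0, ih, hshift,
      cyclicSum_succ, hlast]
    have hpow : (d : ℝ) ^ (n + 1 + 1) * (d : ℝ)⁻¹ ^ (n + 1) = d := by
      rw [pow_succ, mul_right_comm, ← mul_pow, mul_inv_cancel₀ hd0, one_pow, one_mul]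
    linear_combination (-Real.log (c (t - 1))) * hpow

lemma cyclicBlowup_isBinary : IsBinary (cyclicBlowup c) := fun p q => by
  unfold cyclicBlowup
  split <;> omega

lemma cyclicBlowup_pow_pos (hc : ∀ t, 1 ≤ c t) {n : ℕ} (hn : 1 ≤ n)
    {p q : Σ t : Fin L, Fin (c t)} (h : q.1 + n = p.1) : 0 < (cyclicBlowup c ^ n) p q := by
  induction n, hn using Nat.le_induction generalizing q with
  | base =>
    rw [pow_one, cyclicBlowup, if_pos (by simpa using h)]
    exact one_pos
  | succ n _ ih =>
    let r : Σ t : Fin L, Fin (c t) := ⟨q.1 + 1, 0, hc _⟩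
    have hr : 0 < (cyclicBlowup c ^ n) p r * cyclicBlowup c r q :=
      Nat.mul_pos (ih (by rw [← h]; push_cast; ring)) (by simp [cyclicBlowup, r])
    rw [pow_succ, Matrix.mul_apply]
    exact hr.trans_le <| Finset.single_le_sum
      (f := fun j => (cyclicBlowup c ^ n) p j * cyclicBlowup c j q)
      (fun _ _ => Nat.zero_le _) (Finset.mem_univ r)

lemma cyclicBlowup_irreducible (hc : ∀ t, 1 ≤ c t) : MatIrreducible (cyclicBlowup c) :=
  fun p q => ⟨((p.1 - q.1 : Fin L) : ℕ) + L, by have := NeZero.pos L; omega,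
    cyclicBlowup_pow_pos hc (by have := NeZero.pos L; omega) (by
      push_cast [Fin.natCast_self, Fin.cast_val_eq_self]
      ring)⟩

lemma treeEntropy_cyclicBlowup_mem_Icc (hd : 1 ≤ d) (hc : ∀ t, 1 ≤ c t) {a b : ℝ} (ha : 0 ≤ a)
    (hup : ∀ n s, cyclicSum (d : ℝ)⁻¹ (fun t => Real.log (c t)) n s ≤ b)
    (hlow : ∀ᶠ n in atTop, ∃ s, a ≤ cyclicSum (d : ℝ)⁻¹ (fun t => Real.log (c t)) n s) :
    treeEntropy d (cyclicBlowup c) ∈ Set.Icc (((d : ℝ) - 1) * a) (((d : ℝ) - 1) * b) := by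
  have : Nonempty (Σ t : Fin L, Fin (c t)) := ⟨⟨0, 0, hc 0⟩⟩
  refine treeEntropy_mem_Icc hd _ ha
    (fun n p => (treeP_cyclicBlowup d c n p).symm ▸ one_le_layerCount d hc n p.1)
    (fun n p => ?_) (hlow.mono fun n ⟨s, hs⟩ => ⟨⟨s + n, 0, hc _⟩, ?_⟩)
  · rw [treeP_cyclicBlowup, log_layerCount d (by omega) hc]
    exact mul_le_mul_of_nonneg_left (hup n _) (by positivity)
  · rw [treeP_cyclicBlowup, log_layerCount d (by omega) hc, add_sub_cancel_right]
    exact mul_le_mul_of_nonneg_left hs (by positivity)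

end CyclicBlowup

open Fin.CommRing in
/-- The witness is the cyclic blow-up with layer sizes an optimal cyclic shift of `y` padded
with `N` ones. -/
lemma exists_mem_HsetIrr_near_maxCyclicSum {d l : ℕ} [NeZero l] (hd : 2 ≤ d) (y : Fin l → ℕ)
    (hy : ∀ i, 1 ≤ y i) (N : ℕ) :
    ∃ x ∈ HsetIrr d, x ∈ Set.Icc (((d : ℝ) - 1) * maxCyclicSum (d : ℝ)⁻¹ (fun i => Real.log (y i)))
      (((d : ℝ) - 1) * (maxCyclicSum (d : ℝ)⁻¹ (fun i => Real.log (y i)) /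
        (1 - (d : ℝ)⁻¹ ^ (l + N)))) := by
  set u : Fin l → ℝ := fun i => Real.log (y i)
  have hu : 0 ≤ u := fun i => Real.log_nonneg (by exact_mod_cast hy i)
  have hq0 : (0 : ℝ) ≤ (d : ℝ)⁻¹ := by positivity
  have hq1 : (d : ℝ)⁻¹ < 1 := inv_lt_one_of_one_lt₀ (by exact_mod_cast hd)
  obtain ⟨m, -, hm⟩ : ∃ m ∈ Finset.univ, maxCyclicSum (d : ℝ)⁻¹ u = cyclicSum (d : ℝ)⁻¹ u l m :=
    Finset.exists_mem_eq_sup' _ _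
  set c : Fin (l + N) → ℕ := Fin.append (fun i => y (m + i)) 1
  have hc : ∀ t, 1 ≤ c t := fun t => by
    induction t using Fin.addCases with
    | left i => simpa [c] using hy (m + i)
    | right j => simp [c]
  have hlogc : (fun t => Real.log (c t)) = Fin.append (fun i => u (m + i)) 0 := funext fun t => by
    induction t using Fin.addCases with
    | left i => simp [c, u]
    | right j => simp [c]
  have : Nonempty (Σ t, Fin (c t)) := ⟨⟨0, 0, hc 0⟩⟩
  refine ⟨_, treeEntropy_mem_HsetIrr d cyclicBlowup_isBinary (cyclicBlowup_irreducible hc),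
    treeEntropy_cyclicBlowup_mem_Icc d (by omega) hc (hm ▸ cyclicSum_nonneg hq0 hu l m)
      (fun n s => hlogc ▸ cyclicSum_rotate_append_zero_le hq0 hq1 hu m n s)
      (eventually_atTop.2 ⟨l, fun n hn =>
        ⟨0, hlogc ▸ maxCyclicSum_le_cyclicSum_rotate_append_zero hq0 hu hm.symm hn⟩⟩)⟩

/-- **Theorem 5.1 (first part).** For every finite positive integer sequence
`y₁,…,y_l`, the number `μ = (d−1)·max over cyclic shifts (w₁,…,w_l) of
Σᵢ log wᵢ / dⁱ` is a limit of entropies of irreducible hom Markov tree-shifts;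
in particular it lies in the closure of `H^{(d)}_irr`. -/
theorem mu_mem_closure_HsetIrr {d l : ℕ} (hd : 2 ≤ d) (hl : 1 ≤ l)
    (y : Fin l → ℕ) (hy : ∀ i, 1 ≤ y i) (μ : ℝ)
    (hμ : μ = ((d : ℝ) - 1) * Finset.univ.sup' ⟨⟨0, hl⟩, Finset.mem_univ _⟩
      (fun m : Fin l => ∑ i : Fin l, Real.log (y (m + i)) / (d : ℝ) ^ ((i : ℕ) + 1))) :
    μ ∈ closure (HsetIrr d) ∧
    ∃ (k : ℕ → ℕ) (M : ∀ N, Matrix (Fin (k N)) (Fin (k N)) ℕ),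
      (∀ N, 1 ≤ k N ∧ IsBinary (M N) ∧ MatIrreducible (M N)) ∧
      Filter.Tendsto (fun N => treeEntropy d (M N)) Filter.atTop (nhds μ) := by
  have : NeZero l := ⟨by omega⟩
  have hμ' : μ = ((d : ℝ) - 1) * maxCyclicSum (d : ℝ)⁻¹ (fun i => Real.log (y i)) := by
    rw [hμ, maxCyclicSum]
    congr 2 with m
    rw [cyclicSum_eq_sum_fin]
    exact Finset.sum_congr rfl fun i _ => by rw [inv_pow, div_eq_inv_mul]
  choose x hxH hxI using exists_mem_HsetIrr_near_maxCyclicSum hd y hy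
  have hq : Tendsto (fun N => (d : ℝ)⁻¹ ^ (l + N)) atTop (𝓝 0) := by
    simpa only [pow_add, mul_zero] using (tendsto_pow_atTop_nhds_zero_of_lt_one (by positivity)
      (inv_lt_one_of_one_lt₀ (by exact_mod_cast hd))).const_mul ((d : ℝ)⁻¹ ^ l)
  have hx : Tendsto x atTop (𝓝 μ) := by
    refine tendsto_of_tendsto_of_tendsto_of_le_of_le tendsto_const_nhds ?_
      (fun N => hμ' ▸ (hxI N).1) (fun N => (hxI N).2)
    have hden : Tendsto (fun N => 1 - (d : ℝ)⁻¹ ^ (l + N)) atTop (𝓝 1) := by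
      simpa using (tendsto_const_nhds (x := (1 : ℝ))).sub hq
    simpa [hμ'] using tendsto_const_nhds.mul (tendsto_const_nhds.div hden one_ne_zero)
  refine ⟨mem_closure_of_tendsto hx (Eventually.of_forall hxH), ?_⟩
  choose k hk M hb hM hxM using hxH
  exact ⟨k, M, fun N => ⟨hk N, hb N, hM N⟩, by simpa only [← hxM] using hx⟩
end

section
/- Fix d ≥ 2. The set H^{(d)}_irr = {h(T_M) : k ≥ 1 and M is an irreducible k×k matrix with entries in {0,1}} is dense in the interval [(d−1)·log 2, ∞); that is, every real number x ≥ (d−1)·log 2 lies in the closure of H^{(d)}_irr. -/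
open Filter Real

/-!
Group the states into `N` cyclically ordered classes, class `i` holding `c i` states, and let
every state of class `i` point to every state of class `i + 1`. The number `p n i` of `n`-blocks
with root in class `i` satisfies `p (n + 1) i = (c (i + 1) * p n (i + 1)) ^ d`, hence
`log p n i = d ^ n * ∑_{s < n} d⁻¹ ^ s * log c (i + n - s)`, and the entropy is `(d - 1) / d`
times the largest value of the periodic series `S φ = ∑_{s ≥ 0} d⁻¹ ^ s * log c (φ - s)`.

Given `t ≥ d`, take `N = m + 1` and `c (-s) = 2 ^ a s`, where `a s` is the `s`-th base-`d` digit
of `t` and `a 0 = ⌊t⌋`. As `⌊t⌋ ≥ d` while the other digits are at most `d - 1`, the recursion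
`S φ = log c φ + S (φ - 1) / d` keeps `S` maximal at `φ = 0`, where
`S 0 = log 2 * (⌊d ^ m * t⌋ / d ^ m) / (1 - d⁻¹ ^ (m + 1)) → t * log 2`. So the entropies tend to
`(d - 1) / d * t * log 2`, which sweeps out `[(d - 1) * log 2, ∞)` as `t` runs through `[d, ∞)`.
-/

open Filter Topology

namespace TreeShift

section Reindex

variable {d : ℕ} {ι κ : Type} [Fintype ι] [Fintype κ]

lemma treeP_reindex (M : Matrix ι ι ℕ) (e : ι ≃ κ) (n : ℕ) (j : κ) :
    treeP d (Matrix.reindex e e M) n j = treeP d M n (e.symm j) := by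
  induction n generalizing j with
  | zero => rfl
  | succ n ih =>
    simp only [treeP]
    rw [← e.symm.sum_comp]
    simp only [ih]
    rfl

lemma treeEntropy_reindex (M : Matrix ι ι ℕ) (e : ι ≃ κ) :
    treeEntropy d (Matrix.reindex e e M) = treeEntropy d M := by
  unfold treeEntropy
  congr 1
  funext n
  rw [← e.symm.sum_comp]
  simp only [treeP_reindex]

lemma matIrreducible_reindex [DecidableEq ι] [DecidableEq κ] {M : Matrix ι ι ℕ}
    (h : MatIrreducible M) (e : ι ≃ κ) : MatIrreducible (Matrix.reindex e e M) := by
  intro i j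
  obtain ⟨n, hn, hpos⟩ := h (e.symm i) (e.symm j)
  refine ⟨n, hn, ?_⟩
  rwa [← Matrix.coe_reindexRingEquiv ℕ, ← map_pow]

lemma treeEntropy_mem_HsetIrr [DecidableEq ι] [Nonempty ι] {M : Matrix ι ι ℕ}
    (hb : IsBinary M) (hirr : MatIrreducible M) : treeEntropy d M ∈ HsetIrr d :=
  let e := Fintype.equivFin ι
  ⟨Fintype.card ι, Fintype.card_pos, Matrix.reindex e e M, fun _ _ => hb _ _,
    matIrreducible_reindex hirr e, (treeEntropy_reindex M e).symm⟩

end Reindex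

section PeriodicSum

variable {N : ℕ} (q : ℝ) (L : ZMod N → ℝ)

def backSum (φ : ZMod N) (n : ℕ) : ℝ := ∑ s ∈ Finset.range n, q ^ s * L (φ - s)

/-- The series `∑' s, q ^ s * L (φ - s)`, summed period by period. -/
noncomputable def periodSum (φ : ZMod N) : ℝ := backSum q L φ N / (1 - q ^ N)

lemma backSum_succ (φ : ZMod N) (n : ℕ) :
    backSum q L φ (n + 1) = backSum q L φ n + q ^ n * L (φ - n) :=
  Finset.sum_range_succ _ _

lemma backSum_succ' (φ : ZMod N) (n : ℕ) :
    backSum q L φ (n + 1) = L φ + q * backSum q L (φ - 1) n := by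
  rw [backSum, Finset.sum_range_succ', backSum, Finset.mul_sum]
  simp only [Nat.cast_add, Nat.cast_one, Nat.cast_zero, pow_zero, one_mul, sub_zero, pow_succ]
  rw [add_comm]
  congr 1
  exact Finset.sum_congr rfl fun s _ => by rw [sub_add_eq_sub_sub_swap]; ring

lemma backSum_period [NeZero N] (φ : ZMod N) :
    backSum q L φ N = L φ * (1 - q ^ N) + q * backSum q L (φ - 1) N := by
  obtain ⟨m, rfl⟩ := Nat.exists_eq_add_one_of_ne_zero (NeZero.ne N)
  have hm : ((m : ℕ) : ZMod (m + 1)) + 1 = 0 := by exact_mod_cast ZMod.natCast_self (m + 1)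
  rw [backSum_succ', backSum_succ q L (φ - 1) m,
    show φ - 1 - ((m : ℕ) : ZMod (m + 1)) = φ by linear_combination -hm]
  ring

lemma backSum_zero_comp_neg_val (a : ℕ → ℝ) :
    backSum q (fun φ : ZMod N => a (-φ).val) 0 N = ∑ s ∈ Finset.range N, q ^ s * a s :=
  Finset.sum_congr rfl fun s hs => by
    simp only [zero_sub, neg_neg, ZMod.val_cast_of_lt (Finset.mem_range.1 hs)]

variable {q}

lemma periodSum_eq [NeZero N] (hq : q ^ N ≠ 1) (φ : ZMod N) :
    periodSum q L φ = L φ + q * periodSum q L (φ - 1) := by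
  have h : 1 - q ^ N ≠ 0 := sub_ne_zero.2 hq.symm
  rw [periodSum, backSum_period, periodSum]
  field_simp

lemma periodSum_eq_backSum_add [NeZero N] (hq : q ^ N ≠ 1) (φ : ZMod N) (n : ℕ) :
    periodSum q L φ = backSum q L φ n + q ^ n * periodSum q L (φ - n) := by
  induction n with
  | zero => simp [backSum]
  | succ n ih =>
    rw [ih, periodSum_eq L hq (φ - n), backSum_succ, Nat.cast_succ, sub_sub]
    ring

lemma periodSum_nonneg (hq0 : 0 ≤ q) (hq1 : q ≤ 1) (hL : 0 ≤ L) (φ : ZMod N) :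
    0 ≤ periodSum q L φ :=
  div_nonneg (Finset.sum_nonneg fun s _ => mul_nonneg (pow_nonneg hq0 s) (hL _))
    (sub_nonneg.2 (pow_le_one₀ hq0 hq1))

lemma backSum_le_periodSum [NeZero N] (hq0 : 0 ≤ q) (hq1 : q < 1) (hL : 0 ≤ L) (φ : ZMod N)
    (n : ℕ) : backSum q L φ n ≤ periodSum q L φ := by
  rw [periodSum_eq_backSum_add L (pow_lt_one₀ hq0 hq1 (NeZero.ne N)).ne φ n]
  exact le_add_of_nonneg_right
    (mul_nonneg (pow_nonneg hq0 n) (periodSum_nonneg L hq0 hq1.le hL (φ - n)))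

lemma periodSum_le_of_forall_ne [NeZero N] (hq0 : 0 ≤ q) (hq : q ^ N ≠ 1) {φ₀ : ZMod N}
    (hL : ∀ φ ≠ φ₀, L φ ≤ (1 - q) * periodSum q L φ₀) (φ : ZMod N) :
    periodSum q L φ ≤ periodSum q L φ₀ := by
  suffices ∀ t < N, periodSum q L (φ₀ + t) ≤ periodSum q L φ₀ by
    simpa using this (φ - φ₀).val (ZMod.val_lt _)
  intro t ht
  induction t with
  | zero => simp
  | succ t ih =>
    have hne : φ₀ + ((t + 1 : ℕ) : ZMod N) ≠ φ₀ := by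
      rw [Ne, add_eq_left, ZMod.natCast_eq_zero_iff]
      exact Nat.not_dvd_of_pos_of_lt t.succ_pos ht
    rw [periodSum_eq L hq, show φ₀ + ((t + 1 : ℕ) : ZMod N) - 1 = φ₀ + t by push_cast; ring]
    calc _ ≤ (1 - q) * periodSum q L φ₀ + q * periodSum q L φ₀ :=
          add_le_add (hL _ hne) (mul_le_mul_of_nonneg_left (ih (by omega)) hq0)
      _ = periodSum q L φ₀ := by ring

end PeriodicSum

section CyclicMatrix

variable (d : ℕ) {N : ℕ} (c : ZMod N → ℕ)

def cyclicCount : ℕ → ZMod N → ℕ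
  | 0, _ => 1
  | n + 1, i => (c (i + 1) * cyclicCount n (i + 1)) ^ d

variable {d c}

lemma cyclicCount_pos (hc : ∀ i, 0 < c i) (n : ℕ) (i : ZMod N) : 0 < cyclicCount d c n i := by
  induction n generalizing i with
  | zero => exact Nat.one_pos
  | succ n ih => exact pow_pos (Nat.mul_pos (hc _) (ih _)) d

lemma log_cyclicCount (hd : d ≠ 0) (hc : ∀ i, 0 < c i) (n : ℕ) (i : ZMod N) :
    Real.log (cyclicCount d c n i)
      = d ^ n * backSum (d : ℝ)⁻¹ (fun φ => Real.log (c φ)) (i + n) n := by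
  induction n generalizing i with
  | zero => simp [cyclicCount, backSum]
  | succ n ih =>
    have hc' : (c (i + 1) : ℝ) ≠ 0 := by exact_mod_cast (hc _).ne'
    have hp : (cyclicCount d c n (i + 1) : ℝ) ≠ 0 := by
      exact_mod_cast (cyclicCount_pos hc _ _).ne'
    rw [cyclicCount, Nat.cast_pow, Nat.cast_mul, Real.log_pow, Real.log_mul hc' hp, ih,
      backSum_succ, show i + ((n + 1 : ℕ) : ZMod N) = i + 1 + n by push_cast; ring,
      add_sub_cancel_right, inv_pow]
    have hd' : (d : ℝ) ≠ 0 := by exact_mod_cast hd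
    field_simp
    ring

variable [NeZero N] (c)

abbrev CyclicState : Type := (i : ZMod N) × Fin (c i)

def cyclicMatrix : Matrix (CyclicState c) (CyclicState c) ℕ :=
  fun u v => if v.1 = u.1 + 1 then 1 else 0

lemma isBinary_cyclicMatrix : IsBinary (cyclicMatrix c) := fun u v => by
  unfold cyclicMatrix
  split_ifs <;> omega

lemma treeP_cyclicMatrix (d n : ℕ) (u : CyclicState c) :
    treeP d (cyclicMatrix c) n u = cyclicCount d c n u.1 := by
  induction n generalizing u with
  | zero => rfl
  | succ n ih =>
    simp only [treeP, cyclicCount, ih]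
    rw [← Finset.univ_sigma_univ, Finset.sum_sigma]
    simp [cyclicMatrix]

variable {c}

lemma cyclicMatrix_pow_pos (hc : ∀ i, 0 < c i) (n : ℕ) (u v : CyclicState c)
    (huv : v.1 = u.1 + (n + 1 : ℕ)) : 0 < (cyclicMatrix c ^ (n + 1)) u v := by
  induction n generalizing v with
  | zero => simp [cyclicMatrix, huv]
  | succ n ih =>
    let w : CyclicState c := ⟨u.1 + (n + 1 : ℕ), ⟨0, hc _⟩⟩
    have hwv : cyclicMatrix c w v = 1 := by
      simp only [cyclicMatrix, w, huv]
      push_cast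
      simp [add_assoc]
    rw [pow_succ, Matrix.mul_apply]
    exact Finset.sum_pos' (fun _ _ => Nat.zero_le _)
      ⟨w, Finset.mem_univ _, by rw [hwv, mul_one]; exact ih w rfl⟩

lemma matIrreducible_cyclicMatrix (hc : ∀ i, 0 < c i) : MatIrreducible (cyclicMatrix c) := by
  intro u v
  obtain ⟨n, hn⟩ := Nat.exists_eq_add_one_of_ne_zero (n := (v.1 - u.1).val + N) (by
    have := NeZero.ne N; omega)
  refine ⟨n + 1, by omega, cyclicMatrix_pow_pos hc n u v ?_⟩
  rw [← hn]
  simp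

end CyclicMatrix

section Entropy

lemma deltaCard_mul_sub_one (d n : ℕ) :
    (deltaCard d n : ℝ) * (d - 1) = (d : ℝ) ^ (n + 1) - 1 := by
  rw [deltaCard, Nat.cast_sum]
  push_cast
  exact geom_sum_mul _ _

lemma tendsto_div_deltaCard {d : ℕ} (hd : 1 < d) {f : ℕ → ℝ} {A C : ℝ}
    (hf : ∀ n, |f n - d ^ n * A| ≤ C) :
    Tendsto (fun n => f n / deltaCard d n) atTop (𝓝 ((d - 1) / d * A)) := by
  have hd' : (1 : ℝ) < d := by exact_mod_cast hd
  have hd0 : (0 : ℝ) < d := by linarith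
  have hq1 : (d : ℝ)⁻¹ < 1 := inv_lt_one_of_one_lt₀ hd'
  have hq : Tendsto (fun n : ℕ => ((d : ℝ)⁻¹) ^ n) atTop (𝓝 0) :=
    tendsto_pow_atTop_nhds_zero_of_lt_one (by positivity) hq1
  have hfA : Tendsto (fun n => f n / d ^ n) atTop (𝓝 A) := by
    refine tendsto_sub_nhds_zero_iff.1 (squeeze_zero_norm (fun n => ?_) (by
      simpa using hq.const_mul C))
    have hdn : (0 : ℝ) < d ^ n := by positivity
    rw [Real.norm_eq_abs, show f n / d ^ n - A = (f n - d ^ n * A) / d ^ n by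
      field_simp, abs_div, abs_of_pos hdn, ← div_eq_mul_inv]
    exact div_le_div_of_nonneg_right (hf n) hdn.le
  have hlim := (hfA.const_mul ((d : ℝ) - 1)).div
    ((tendsto_const_nhds (x := (d : ℝ))).sub hq) (by rw [sub_zero]; exact hd0.ne')
  refine (hlim.congr fun n => ?_).trans (by rw [sub_zero, mul_div_right_comm])
  have hΔ : (deltaCard d n : ℝ) = (d ^ (n + 1) - 1) / (d - 1) :=
    eq_div_of_mul_eq (by linarith) (deltaCard_mul_sub_one d n)
  have hnum : (d : ℝ) ^ (n + 1) - 1 ≠ 0 := (sub_pos.2 (one_lt_pow₀ hd' n.succ_ne_zero)).ne'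
  have hdn : (0 : ℝ) < d ^ n := by positivity
  have hden : (d : ℝ) - (d : ℝ)⁻¹ ^ n = (d ^ (n + 1) - 1) / d ^ n := by
    rw [inv_pow]; field_simp; ring
  simp only [Pi.div_apply]
  rw [hΔ, hden]
  field_simp

lemma abs_log_sum_sub_le {ι : Type*} [Fintype ι] {p : ι → ℝ} (hp : ∀ i, 0 < p i) {B C : ℝ}
    (hC : 0 ≤ C) (hub : ∀ i, Real.log (p i) ≤ B) (i₀ : ι) (hlb : B - C ≤ Real.log (p i₀)) :
    |Real.log (∑ i, p i) - B| ≤ C + Real.log (Fintype.card ι) := by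
  have hcard : (0 : ℝ) < Fintype.card ι := by
    have := Fintype.card_pos_iff.2 ⟨i₀⟩
    positivity
  have hsum_ge : p i₀ ≤ ∑ i, p i :=
    Finset.single_le_sum (fun i _ => (hp i).le) (Finset.mem_univ i₀)
  have hsum_le : ∑ i, p i ≤ Fintype.card ι * Real.exp B := by
    calc ∑ i, p i ≤ ∑ _i : ι, Real.exp B :=
          Finset.sum_le_sum fun i _ => (Real.log_le_iff_le_exp (hp i)).1 (hub i)
      _ = Fintype.card ι * Real.exp B := by simp
  have hlog_ge := Real.log_le_log (hp i₀) hsum_ge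
  have hlog_le := Real.log_le_log ((hp i₀).trans_le hsum_ge) hsum_le
  rw [Real.log_mul hcard.ne' (Real.exp_pos B).ne', Real.log_exp] at hlog_le
  have := Real.log_nonneg (Nat.one_le_cast.2 (Fintype.card_pos_iff.2 ⟨i₀⟩))
  rw [abs_sub_le_iff]
  constructor <;> linarith

variable {d N : ℕ} [NeZero N] {c : ZMod N → ℕ}

theorem treeEntropy_cyclicMatrix (hd : 1 < d) (hc : ∀ i, 0 < c i) {φ₀ : ZMod N}
    (hmax : ∀ φ, periodSum (d : ℝ)⁻¹ (fun φ => Real.log (c φ)) φ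
      ≤ periodSum (d : ℝ)⁻¹ (fun φ => Real.log (c φ)) φ₀) :
    treeEntropy d (cyclicMatrix c)
      = (d - 1) / d * periodSum (d : ℝ)⁻¹ (fun φ => Real.log (c φ)) φ₀ := by
  set L : ZMod N → ℝ := fun φ => Real.log (c φ)
  set A := periodSum (d : ℝ)⁻¹ L φ₀
  have hd' : (1 : ℝ) < d := by exact_mod_cast hd
  have hq0 : (0 : ℝ) ≤ (d : ℝ)⁻¹ := by positivity
  have hq1 : (d : ℝ)⁻¹ < 1 := inv_lt_one_of_one_lt₀ hd'
  have hL : 0 ≤ L := fun φ => Real.log_natCast_nonneg _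
  have hA : 0 ≤ A := periodSum_nonneg L hq0 hq1.le hL φ₀
  have hlog (n : ℕ) (u : CyclicState c) : Real.log (treeP d (cyclicMatrix c) n u)
      = d ^ n * backSum (d : ℝ)⁻¹ L (u.1 + n) n := by
    rw [treeP_cyclicMatrix]
    exact log_cyclicCount (by omega) hc n u.1
  have hlb (n : ℕ) : (d : ℝ) ^ n * A - A ≤ d ^ n * backSum (d : ℝ)⁻¹ L φ₀ n := by
    have hsplit := periodSum_eq_backSum_add L (pow_lt_one₀ hq0 hq1 (NeZero.ne N)).ne φ₀ n
    have hmid := mul_le_mul_of_nonneg_left (hmax (φ₀ - n)) (pow_nonneg hq0 n)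
    have hdn : (0 : ℝ) < d ^ n := by positivity
    calc (d : ℝ) ^ n * A - A = d ^ n * (A - (d : ℝ)⁻¹ ^ n * A) := by
          rw [inv_pow]; field_simp
      _ ≤ d ^ n * backSum (d : ℝ)⁻¹ L φ₀ n := mul_le_mul_of_nonneg_left (by linarith) hdn.le
  have hbound (n : ℕ) := abs_log_sum_sub_le
    (p := fun u => (treeP d (cyclicMatrix c) n u : ℝ)) (B := (d : ℝ) ^ n * A)
    (fun u => by rw [treeP_cyclicMatrix]; exact_mod_cast cyclicCount_pos hc n _) hA
    (fun u => by
      rw [hlog]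
      exact mul_le_mul_of_nonneg_left
        ((backSum_le_periodSum L hq0 hq1 hL _ n).trans (hmax _)) (by positivity))
    ⟨φ₀ - n, ⟨0, hc _⟩⟩ (by rw [hlog, sub_add_cancel]; exact hlb n)
  exact (tendsto_div_deltaCard hd hbound).limsup_eq

end Entropy

section Digits

noncomputable def baseDigit (d : ℕ) (t : ℝ) : ℕ → ℕ
  | 0 => ⌊t⌋₊
  | s + 1 => ⌊(d : ℝ) ^ (s + 1) * t⌋₊ - d * ⌊(d : ℝ) ^ s * t⌋₊

variable {d : ℕ} {t : ℝ}

lemma mul_floor_le_floor_pow_succ_mul (ht : 0 ≤ t) (s : ℕ) :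
    d * ⌊(d : ℝ) ^ s * t⌋₊ ≤ ⌊(d : ℝ) ^ (s + 1) * t⌋₊ := by
  apply Nat.le_floor
  push_cast
  rw [pow_succ', mul_assoc]
  exact mul_le_mul_of_nonneg_left (Nat.floor_le (by positivity)) (Nat.cast_nonneg d)

lemma baseDigit_succ_lt (hd : 0 < d) (ht : 0 ≤ t) (s : ℕ) : baseDigit d t (s + 1) < d := by
  have hle := mul_floor_le_floor_pow_succ_mul (d := d) ht s
  have hlt : ⌊(d : ℝ) ^ (s + 1) * t⌋₊ < d * ⌊(d : ℝ) ^ s * t⌋₊ + d := by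
    rw [Nat.floor_lt (by positivity)]
    push_cast
    rw [pow_succ', mul_assoc, ← mul_add_one]
    exact mul_lt_mul_of_pos_left (Nat.lt_floor_add_one _) (by exact_mod_cast hd)
  simp only [baseDigit]
  omega

lemma sum_baseDigit (hd : d ≠ 0) (ht : 0 ≤ t) (m : ℕ) :
    ∑ s ∈ Finset.range (m + 1), (d : ℝ)⁻¹ ^ s * baseDigit d t s
      = ⌊(d : ℝ) ^ m * t⌋₊ / d ^ m := by
  induction m with
  | zero => simp [baseDigit]
  | succ m ih =>
    rw [Finset.sum_range_succ, ih, baseDigit,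
      Nat.cast_sub (mul_floor_le_floor_pow_succ_mul ht m), inv_pow]
    push_cast
    field_simp
    ring

noncomputable def digitWord (d : ℕ) (t : ℝ) (m : ℕ) : ZMod (m + 1) → ℕ :=
  fun φ => 2 ^ baseDigit d t (-φ).val

variable {m : ℕ}

lemma digitWord_pos (φ : ZMod (m + 1)) : 0 < digitWord d t m φ := by
  unfold digitWord
  positivity

lemma log_digitWord (φ : ZMod (m + 1)) :
    Real.log (digitWord d t m φ) = baseDigit d t (-φ).val * Real.log 2 := by
  rw [digitWord, Nat.cast_pow, Real.log_pow, Nat.cast_ofNat]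

lemma periodSum_digitWord_zero (hd : d ≠ 0) (ht : 0 ≤ t) :
    periodSum (d : ℝ)⁻¹ (fun φ => Real.log (digitWord d t m φ)) 0
      = Real.log 2 * (⌊(d : ℝ) ^ m * t⌋₊ / d ^ m) / (1 - (d : ℝ)⁻¹ ^ (m + 1)) := by
  simp only [periodSum, log_digitWord]
  rw [backSum_zero_comp_neg_val (a := fun s => baseDigit d t s * Real.log 2),
    ← sum_baseDigit hd ht m, Finset.mul_sum]
  congr 1
  exact Finset.sum_congr rfl fun s _ => by ring

lemma periodSum_digitWord_le (hd : 1 < d) (ht : (d : ℝ) ≤ t) (φ : ZMod (m + 1)) :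
    periodSum (d : ℝ)⁻¹ (fun φ => Real.log (digitWord d t m φ)) φ
      ≤ periodSum (d : ℝ)⁻¹ (fun φ => Real.log (digitWord d t m φ)) 0 := by
  have hd' : (1 : ℝ) < d := by exact_mod_cast hd
  have hq0 : (0 : ℝ) ≤ (d : ℝ)⁻¹ := by positivity
  have hq1 : (d : ℝ)⁻¹ < 1 := inv_lt_one_of_one_lt₀ hd'
  have hlog2 : 0 < Real.log 2 := Real.log_pos one_lt_two
  have hL : 0 ≤ fun φ => Real.log (digitWord d t m φ) :=
    fun φ => Real.log_natCast_nonneg _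
  have hlead : (d : ℝ) * Real.log 2
      ≤ periodSum (d : ℝ)⁻¹ (fun φ => Real.log (digitWord d t m φ)) 0 := by
    refine le_trans ?_ (backSum_le_periodSum _ hq0 hq1 hL 0 1)
    have hfloor : (d : ℝ) ≤ ⌊t⌋₊ := by exact_mod_cast Nat.le_floor ht
    simp only [backSum, Finset.sum_range_one, pow_zero, one_mul, Nat.cast_zero, sub_zero,
      log_digitWord, neg_zero, ZMod.val_zero, baseDigit]
    exact mul_le_mul_of_nonneg_right hfloor hlog2.le
  refine periodSum_le_of_forall_ne _ hq0 (pow_lt_one₀ hq0 hq1 (m.succ_ne_zero)).ne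
    (fun ψ hψ => ?_) φ
  obtain ⟨s, hs⟩ := Nat.exists_eq_add_one_of_ne_zero (n := (-ψ).val) (by simpa using hψ)
  have hdigit : (baseDigit d t (s + 1) : ℝ) ≤ d - 1 := by
    have := baseDigit_succ_lt (d := d) (t := t) (by omega) (by linarith) s
    rw [le_sub_iff_add_le]
    exact_mod_cast this
  calc Real.log (digitWord d t m ψ) = baseDigit d t (s + 1) * Real.log 2 := by
        rw [log_digitWord, hs]
    _ ≤ (1 - (d : ℝ)⁻¹) * (d * Real.log 2) := by
        rw [sub_mul, one_mul, ← mul_assoc, inv_mul_cancel₀ (by positivity), one_mul,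
          ← sub_one_mul]
        exact mul_le_mul_of_nonneg_right hdigit hlog2.le
    _ ≤ _ := mul_le_mul_of_nonneg_left hlead (by linarith)

theorem tendsto_treeEntropy_digitWord (hd : 1 < d) (ht : (d : ℝ) ≤ t) :
    Tendsto (fun m => treeEntropy d (cyclicMatrix (digitWord d t m))) atTop
      (𝓝 ((d - 1) / d * (Real.log 2 * t))) := by
  have hd' : (1 : ℝ) < d := by exact_mod_cast hd
  have hq0 : (0 : ℝ) ≤ (d : ℝ)⁻¹ := by positivity
  have hq1 : (d : ℝ)⁻¹ < 1 := inv_lt_one_of_one_lt₀ hd'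
  have hentropy (m : ℕ) : treeEntropy d (cyclicMatrix (digitWord d t m))
      = (d - 1) / d
        * (Real.log 2 * (⌊(d : ℝ) ^ m * t⌋₊ / d ^ m) / (1 - (d : ℝ)⁻¹ ^ (m + 1))) := by
    rw [treeEntropy_cyclicMatrix hd digitWord_pos (periodSum_digitWord_le hd ht),
      periodSum_digitWord_zero (by omega) (by linarith)]
  refine Tendsto.congr (fun m => (hentropy m).symm) ?_
  have hfloor : Tendsto (fun m : ℕ => (⌊(d : ℝ) ^ m * t⌋₊ : ℝ) / d ^ m) atTop (𝓝 t) := by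
    refine ((tendsto_nat_floor_mul_div_atTop (a := t) (by linarith)).comp
      (tendsto_pow_atTop_atTop_of_one_lt hd')).congr fun m => ?_
    rw [Function.comp_apply, mul_comm t]
  have hq : Tendsto (fun m : ℕ => (d : ℝ)⁻¹ ^ (m + 1)) atTop (𝓝 0) :=
    (tendsto_pow_atTop_nhds_zero_of_lt_one hq0 hq1).comp (tendsto_add_atTop_nat 1)
  have hlim := ((hfloor.const_mul (Real.log 2)).div
    ((tendsto_const_nhds (x := (1 : ℝ))).sub hq) (by norm_num)).const_mul (((d : ℝ) - 1) / d)
  rwa [sub_zero, div_one] at hlim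

end Digits

end TreeShift

open TreeShift

/-- **Theorem 5.1 (second part).** `H^{(d)}_irr` is dense in `[(d−1)·log 2, ∞)`. -/
theorem HsetIrr_dense_ge (d : ℕ) (hd : 2 ≤ d) :
    ∀ x : ℝ, ((d : ℝ) - 1) * Real.log 2 ≤ x → x ∈ closure (HsetIrr d) := by
  intro x hx
  have hscale : (0 : ℝ) < (d - 1) / d * Real.log 2 := by
    have : (2 : ℝ) ≤ d := by exact_mod_cast hd
    have := Real.log_pos one_lt_two
    have : (0 : ℝ) < d - 1 := by linarith
    positivity
  set t := x / ((d - 1) / d * Real.log 2)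
  have ht : (d : ℝ) ≤ t := by
    rw [le_div_iff₀ hscale]
    calc (d : ℝ) * ((d - 1) / d * Real.log 2) = (d - 1) * Real.log 2 := by
          field_simp
      _ ≤ x := hx
  have hx_eq : (d - 1) / d * (Real.log 2 * t) = x := by
    rw [← mul_assoc]; exact mul_div_cancel₀ x hscale.ne'
  rw [← hx_eq]
  refine mem_closure_of_tendsto (tendsto_treeEntropy_digitWord hd ht)
    (Eventually.of_forall fun m => ?_)
  have : Nonempty (CyclicState (digitWord d t m)) := ⟨⟨0, 0, digitWord_pos 0⟩⟩
  exact treeEntropy_mem_HsetIrr (isBinary_cyclicMatrix _)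
    (matIrreducible_cyclicMatrix digitWord_pos)
end
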